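/- Let τ be a locally finite positive Borel measure on ℝ supported in [0,∞). If ∫₀^∞ log[ 1 + (M_sτ(k)/k)² ] k² dk < ∞, then Σ_{n=0}^∞ τ([n,n+1])² < ∞. -/

import Mathlib

open MeasureTheory Set
open scoped ENNReal

/-- The short-range Hardy–Littlewood maximal function
`(M_sτ)(x) = sup_{0 < L ≤ 1} τ([x−L, x+L])/(2L)`. -/
noncomputable def maxShort (τ : Measure ℝ) (x : ℝ) : ℝ≥0∞ :=
  ⨆ (L : ℝ) (_ : 0 < L) (_ : L ≤ 1), τ (Icc (x - L) (x + L)) / ENNReal.ofReal (2 * L)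

/-- The integrand `log[1 + (M_sτ(k)/k)²]·k²`, with value `∞` where `M_sτ(k) = ∞`. -/
noncomputable def logMaxShort (τ : Measure ℝ) (k : ℝ) : ℝ≥0∞ :=
  if maxShort τ k = ⊤ then ⊤
  else ENNReal.ofReal (Real.log (1 + ((maxShort τ k).toReal / k) ^ 2) * k ^ 2)

/-!
For `k ∈ [n, n + 1]` with `n ≥ 1`, the window `L = 1` gives `M_sτ(k) ≥ τ([n, n + 1]) / 2`, and
`log (1 + y) ≥ min y 1 / 2` then bounds the integrand below by `min (τ([n, n + 1])², 4) / 8`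
on the whole interval. So `∑ min (τ([n, n + 1])², 4)` converges; only finitely many of its terms
can be truncated, and each `τ([n, n + 1])` is finite because `τ` is locally finite.
-/

theorem min_div_two_le_log_one_add {y : ℝ} (hy : 0 ≤ y) : min y 1 / 2 ≤ Real.log (1 + y) := by
  have hlog : y / (1 + y) ≤ Real.log (1 + y) := by
    calc y / (1 + y) = 1 - (1 + y)⁻¹ := by field_simp; ring
      _ ≤ Real.log (1 + y) := Real.one_sub_inv_le_log_of_pos (by linarith)
  refine le_trans ?_ hlog
  rw [le_div_iff₀ (by linarith)]
  rcases le_total y 1 with h | h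
  · rw [min_eq_left h]; nlinarith
  · rw [min_eq_right h]; linarith

theorem ENNReal.tsum_ne_top_of_tsum_min_ne_top {α : Type*} {x : α → ℝ≥0∞} {c : ℝ≥0∞}
    (hx : ∀ i, x i ≠ ∞) (hc : c ≠ 0) (h : ∑' i, min (x i) c ≠ ∞) : ∑' i, x i ≠ ∞ := by
  classical
  set F := (ENNReal.finite_const_le_of_tsum_ne_top h hc).toFinset
  have hle : ∀ i, x i ≤ (F : Set α).indicator x i + min (x i) c := by
    intro i
    by_cases hi : i ∈ F
    · rw [indicator_of_mem (by simpa using hi)]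
      exact le_self_add
    · replace hi : x i < c := by simpa [F] using hi
      rw [min_eq_left hi.le]
      exact le_add_self
  refine ne_top_of_le_ne_top ?_ (ENNReal.tsum_le_tsum hle)
  rw [ENNReal.tsum_add, ← sum_eq_tsum_indicator]
  exact ENNReal.add_ne_top.2 ⟨ENNReal.sum_ne_top.2 fun i _ => hx i, h⟩

theorem measure_Icc_div_two_le_maxShort (τ : Measure ℝ) (x : ℝ) :
    τ (Icc (x - 1) (x + 1)) / 2 ≤ maxShort τ x :=
  le_iSup₂_of_le (1 : ℝ) one_pos <| le_iSup_of_le le_rfl <| by norm_num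

theorem min_sq_le_mul_logMaxShort (τ : Measure ℝ) {k : ℝ} (hk : 1 ≤ k) :
    min (τ (Icc (k - 1) (k + 1)) ^ 2) 4 ≤ 8 * logMaxShort τ k := by
  by_cases htop : maxShort τ k = ∞
  · simp [logMaxShort, htop]
  have hM := measure_Icc_div_two_le_maxShort τ k
  have hA : τ (Icc (k - 1) (k + 1)) ≠ ∞ := by
    rintro hA
    rw [hA, ENNReal.top_div_of_ne_top (by norm_num), top_le_iff] at hM
    exact htop hM
  set a := (τ (Icc (k - 1) (k + 1))).toReal
  set m := (maxShort τ k).toReal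
  have ham : a ≤ 2 * m := by
    have := ENNReal.toReal_mono htop hM
    rw [ENNReal.toReal_div, ENNReal.toReal_ofNat] at this
    linarith
  have ha : 0 ≤ a := ENNReal.toReal_nonneg
  have hk0 : 0 < k := by linarith
  rw [logMaxShort, if_neg htop, ← ENNReal.ofReal_ofNat 8, ← ENNReal.ofReal_mul (by norm_num),
    ENNReal.le_ofReal_iff_toReal_le (by simp [hA])
      (mul_nonneg (by norm_num) (mul_nonneg (Real.log_nonneg (by nlinarith)) (sq_nonneg k))),
    ENNReal.toReal_min (by simp [hA]) (by simp), ENNReal.toReal_pow, ENNReal.toReal_ofNat]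
  calc min (a ^ 2) 4 ≤ 4 * min (m ^ 2) (k ^ 2) := by
        rw [mul_min_of_nonneg _ _ (by norm_num : (0 : ℝ) ≤ 4)]
        exact min_le_min (by nlinarith) (by nlinarith)
    _ = 8 * (min ((m / k) ^ 2) 1 / 2 * k ^ 2) := by
        rw [div_mul_eq_mul_div, min_mul_of_nonneg _ _ (sq_nonneg k), div_pow,
          div_mul_cancel₀ _ (by positivity), one_mul]
        ring
    _ ≤ 8 * (Real.log (1 + (m / k) ^ 2) * k ^ 2) := by
        gcongr
        exact min_div_two_le_log_one_add (sq_nonneg _)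

theorem tsum_le_setLIntegral_Ioi {f : ℝ → ℝ≥0∞} {b : ℕ → ℝ≥0∞} (a : ℝ)
    (hb : ∀ n : ℕ, ∀ k ∈ Ioc (a + n) (a + n + 1), b n ≤ f k) :
    ∑' n, b n ≤ ∫⁻ k in Ioi a, f k := by
  have hdisj : Pairwise (Function.onFun Disjoint fun n : ℕ => Ioc (a + n) (a + n + 1)) := by
    intro i j hij
    simpa using pairwise_disjoint_Ioc_add_intCast a (Nat.cast_injective.ne hij : (i : ℤ) ≠ j)
  have hsub : ⋃ n : ℕ, Ioc (a + n) (a + n + 1) ⊆ Ioi a :=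
    iUnion_subset fun n k hk => mem_Ioi.2 (lt_of_le_of_lt (by simp) hk.1)
  calc ∑' n, b n = ∑' n : ℕ, ∫⁻ _ in Ioc (a + n) (a + n + 1), b n := by
        simp [Real.volume_Ioc]
    _ ≤ ∑' n : ℕ, ∫⁻ k in Ioc (a + n) (a + n + 1), f k :=
        ENNReal.tsum_le_tsum fun n => setLIntegral_mono' measurableSet_Ioc (hb n)
    _ = ∫⁻ k in ⋃ n : ℕ, Ioc (a + n) (a + n + 1), f k :=
        (lintegral_iUnion (fun _ => measurableSet_Ioc) hdisj f).symm
    _ ≤ ∫⁻ k in Ioi a, f k := lintegral_mono_set hsub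

theorem stmt_4_general (τ : Measure ℝ) [IsLocallyFiniteMeasure τ]
    (h : (∫⁻ k in Ioi (0 : ℝ), logMaxShort τ k) < ⊤) :
    (∑' n : ℕ, (τ (Icc (n : ℝ) ((n : ℝ) + 1))) ^ 2) < ⊤ := by
  have hfin (x y : ℝ) : τ (Icc x y) ^ 2 ≠ ∞ :=
    ENNReal.pow_ne_top isCompact_Icc.measure_lt_top.ne
  have htail : ∑' n : ℕ, min (τ (Icc ((n : ℝ) + 1) (n + 1 + 1)) ^ 2) 4
      ≤ ∫⁻ k in Ioi (0 : ℝ), 8 * logMaxShort τ k := by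
    refine (tsum_le_setLIntegral_Ioi 1 fun n k hk => ?_).trans
      (lintegral_mono_set (Ioi_subset_Ioi zero_le_one))
    have hk1 : 1 ≤ k := by linarith [hk.1, n.cast_nonneg (α := ℝ)]
    refine le_trans ?_ (min_sq_le_mul_logMaxShort τ hk1)
    gcongr
    · linarith [hk.2]
    · linarith [hk.1]
  rw [lintegral_const_mul' _ _ (by norm_num)] at htail
  have := ENNReal.tsum_ne_top_of_tsum_min_ne_top (fun n => hfin _ _) four_ne_zero
    (ne_top_of_le_ne_top (by finiteness) htail)
  rw [tsum_eq_zero_add' ENNReal.summable]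
  exact ENNReal.add_lt_top.2 ⟨(hfin _ _).lt_top, by simpa [add_assoc] using this.lt_top⟩

/-- Let `τ` be a locally finite positive Borel measure on `ℝ` supported in
`[0,∞)`.  If `∫₀^∞ log[1 + (M_sτ(k)/k)²] k² dk < ∞`, then `Σₙ τ([n,n+1])² < ∞`. -/
theorem stmt_4 (τ : Measure ℝ) [IsLocallyFiniteMeasure τ] (hsupp : τ (Iio 0) = 0)
    (h : (∫⁻ k in Ioi (0 : ℝ), logMaxShort τ k) < ⊤) :
    (∑' n : ℕ, (τ (Icc (n : ℝ) ((n : ℝ) + 1))) ^ 2) < ⊤ :=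
  stmt_4_general τ h
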